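/- arXiv:1708.09583 — 4 statements merged into one kernel-verified Lean document; each statement's English description precedes it below -/
import Mathlib

section
/- If f : Γ₊ → ℝ is convex, symmetric, homogeneous of degree one, strictly increasing, and normalized with f(1,…,1) = 1, then its dual f_*(z) = f(z₁⁻¹,…,zₙ⁻¹)⁻¹ satisfies f_*(z) ≤ n·(z₁⁻¹ + ⋯ + zₙ⁻¹)⁻¹ for all z ∈ Γ₊; consequently f_* tends to zero as z approaches the boundary of Γ₊ (i.e. as min zᵢ → 0 with z bounded). -/
noncomputable section

/-- The positive cone Γ₊ = {x ∈ ℝⁿ : xᵢ > 0}. -/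
def PosCone (n : ℕ) : Set (Fin n → ℝ) := {x | ∀ i, 0 < x i}

/-- The dual function f_*(z) = f(z₁⁻¹,…,zₙ⁻¹)⁻¹. -/
def dualFn {n : ℕ} (f : (Fin n → ℝ) → ℝ) : (Fin n → ℝ) → ℝ :=
  fun z => (f fun i => (z i)⁻¹)⁻¹

/-!
Averaging `x` over the cyclic shifts of its coordinates gives the constant vector with value
the arithmetic mean of `x`; by Jensen and symmetry `f` is at least its value there, which by
homogeneity and normalization is the arithmetic mean itself. Applied to `z⁻¹` and inverted,
this is the harmonic-mean bound on `f_*`, and the harmonic mean of `z` is at most `min zᵢ`.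
-/

open Finset

section

variable {ι : Type*}

theorem apply_const_of_homogeneous {f : (ι → ℝ) → ℝ}
    (hhomog : ∀ k : ℝ, 0 < k → ∀ x, f (k • x) = k * f x) (hnorm : f (fun _ => 1) = 1)
    {c : ℝ} (hc : 0 < c) : f (fun _ => c) = c := by
  have hconst : (fun _ : ι => c) = c • fun _ => 1 := by ext; simp
  rw [hconst, hhomog c hc, hnorm, mul_one]

theorem nonempty_of_homogeneous {f : (ι → ℝ) → ℝ}
    (hhomog : ∀ k : ℝ, 0 < k → ∀ x, f (k • x) = k * f x) (hnorm : f (fun _ => 1) = 1) :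
    Nonempty ι := by
  by_contra hempty
  have : IsEmpty ι := not_nonempty_iff.1 hempty
  have h2 := apply_const_of_homogeneous hhomog hnorm two_pos
  rw [Subsingleton.elim (fun _ => (2 : ℝ)) fun _ => 1, hnorm] at h2
  norm_num at h2

variable [Fintype ι]

theorem inv_sum_inv_le {z : ι → ℝ} (hz : ∀ i, 0 < z i) (j : ι) : (∑ i, (z i)⁻¹)⁻¹ ≤ z j :=
  inv_le_of_inv_le₀ (hz j) <|
    single_le_sum (f := fun i => (z i)⁻¹) (fun i _ => (inv_pos.2 (hz i)).le) (mem_univ j)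

variable [AddCommGroup ι]

theorem sum_shifts_eq_const {M : Type*} [AddCommMonoid M] (x : ι → M) :
    ∑ k, (fun i => x (i + k)) = fun _ => ∑ j, x j := by
  funext i
  rw [Finset.sum_apply]
  exact Fintype.sum_equiv (Equiv.addLeft i) _ _ fun _ => rfl

theorem ConvexOn.apply_mean_le {s : Set (ι → ℝ)} {f : (ι → ℝ) → ℝ} (hf : ConvexOn ℝ s f)
    (hs : ∀ x ∈ s, ∀ k, (fun i => x (i + k)) ∈ s)
    (hshift : ∀ x ∈ s, ∀ k, f (fun i => x (i + k)) = f x) {x : ι → ℝ} (hx : x ∈ s) :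
    f (fun _ => (∑ j, x j) / Fintype.card ι) ≤ f x := by
  have hcard : (0 : ℝ) < Fintype.card ι := by exact_mod_cast Fintype.card_pos
  have hweights : ∑ _k : ι, (Fintype.card ι : ℝ)⁻¹ = 1 := by simp [hcard.ne']
  calc f (fun _ => (∑ j, x j) / Fintype.card ι)
        = f (∑ k, (Fintype.card ι : ℝ)⁻¹ • fun i => x (i + k)) := by
          rw [← smul_sum, sum_shifts_eq_const]
          simp only [div_eq_inv_mul, Pi.smul_def, smul_eq_mul]
    _ ≤ ∑ k, (Fintype.card ι : ℝ)⁻¹ • f (fun i => x (i + k)) :=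
          hf.map_sum_le (fun _ _ => by positivity) hweights fun k _ => hs x hx k
    _ = f x := by simp [hshift x hx, hcard.ne']

end

theorem mean_le_of_convexOn_posCone {n : ℕ} [NeZero n] {f : (Fin n → ℝ) → ℝ}
    (hconv : ConvexOn ℝ (PosCone n) f)
    (hsymm : ∀ σ : Equiv.Perm (Fin n), ∀ x, f (x ∘ σ) = f x)
    (hhomog : ∀ k : ℝ, 0 < k → ∀ x, f (k • x) = k * f x) (hnorm : f (fun _ => 1) = 1)
    {x : Fin n → ℝ} (hx : x ∈ PosCone n) : (∑ i, x i) / n ≤ f x := by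
  have hmean : 0 < (∑ i, x i) / n :=
    div_pos (sum_pos (fun i _ => hx i) univ_nonempty) (Nat.cast_pos.2 (NeZero.pos n))
  have hjensen := hconv.apply_mean_le (fun x hx k i => hx (i + k))
    (fun x _ k => hsymm (Equiv.addRight k) x) hx
  rwa [Fintype.card_fin, apply_const_of_homogeneous hhomog hnorm hmean] at hjensen

theorem dualFn_le_harmonic_mean {n : ℕ} [NeZero n] {f : (Fin n → ℝ) → ℝ}
    (hmean : ∀ x ∈ PosCone n, (∑ i, x i) / n ≤ f x) {z : Fin n → ℝ} (hz : z ∈ PosCone n) :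
    dualFn f z ≤ n * (∑ i, (z i)⁻¹)⁻¹ := by
  have hinv : (fun i => (z i)⁻¹) ∈ PosCone n := fun i => inv_pos.2 (hz i)
  have hsum := sum_pos (fun i _ => hinv i) univ_nonempty
  calc dualFn f z ≤ ((∑ i, (z i)⁻¹) / n)⁻¹ :=
        inv_anti₀ (div_pos hsum (Nat.cast_pos.2 (NeZero.pos n))) (hmean _ hinv)
    _ = n * (∑ i, (z i)⁻¹)⁻¹ := by rw [inv_div, div_eq_mul_inv]

theorem convex_dual_harmonic_bound_and_boundary_vanishing_general
    {n : ℕ} (f : (Fin n → ℝ) → ℝ)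
    (hconv : ConvexOn ℝ (PosCone n) f)
    (hsymm : ∀ σ : Equiv.Perm (Fin n), ∀ x, f (x ∘ σ) = f x)
    (hhomog : ∀ k : ℝ, 0 < k → ∀ x, f (k • x) = k * f x)
    (hnorm : f (fun _ => 1) = 1) :
    (∀ z ∈ PosCone n, dualFn f z ≤ (n : ℝ) * (∑ i, (z i)⁻¹)⁻¹) ∧
    (∀ ε > (0 : ℝ), ∀ M > (0 : ℝ), ∃ δ > (0 : ℝ), ∀ z ∈ PosCone n,
      (∀ i, z i ≤ M) → (∃ i, z i < δ) → dualFn f z < ε) := by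
  have hn : 0 < n := Fin.pos_iff_nonempty.2 (nonempty_of_homogeneous hhomog hnorm)
  have : NeZero n := NeZero.of_pos hn
  have hn' : (0 : ℝ) < n := Nat.cast_pos.2 hn
  have hbound : ∀ z ∈ PosCone n, dualFn f z ≤ (n : ℝ) * (∑ i, (z i)⁻¹)⁻¹ := fun z hz =>
    dualFn_le_harmonic_mean (fun x hx => mean_le_of_convexOn_posCone hconv hsymm hhomog hnorm hx) hz
  refine ⟨hbound, fun ε hε M _ => ⟨ε / n, by positivity, ?_⟩⟩
  rintro z hz - ⟨j, hj⟩
  calc dualFn f z ≤ n * (∑ i, (z i)⁻¹)⁻¹ := hbound z hz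
    _ ≤ n * z j := by gcongr; exact inv_sum_inv_le hz j
    _ < n * (ε / n) := by gcongr
    _ = ε := by field_simp

/-- For f convex, symmetric, homogeneous of degree one, strictly increasing, normalized,
the dual f_* is bounded by the harmonic mean n(∑ zᵢ⁻¹)⁻¹, and consequently f_* tends
to zero as z approaches the boundary of Γ₊ within bounded sets. -/
theorem convex_dual_harmonic_bound_and_boundary_vanishing
    {n : ℕ} (f : (Fin n → ℝ) → ℝ)
    (hconv : ConvexOn ℝ (PosCone n) f)
    (hsymm : ∀ σ : Equiv.Perm (Fin n), ∀ x, f (x ∘ σ) = f x)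
    (hhomog : ∀ k : ℝ, 0 < k → ∀ x, f (k • x) = k * f x)
    (hmono : ∀ x ∈ PosCone n, ∀ y ∈ PosCone n,
      (∀ i, x i ≤ y i) → (∃ i, x i < y i) → f x < f y)
    (hnorm : f (fun _ => 1) = 1) :
    (∀ z ∈ PosCone n, dualFn f z ≤ (n : ℝ) * (∑ i, (z i)⁻¹)⁻¹) ∧
    (∀ ε > (0 : ℝ), ∀ M > (0 : ℝ), ∃ δ > (0 : ℝ), ∀ z ∈ PosCone n,
      (∀ i, z i ≤ M) → (∃ i, z i < δ) → dualFn f z < ε) :=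
  convex_dual_harmonic_bound_and_boundary_vanishing_general f hconv hsymm hhomog hnorm
end
end

section
/- For each k ∈ {1,…,n}, the function f_*(z) = (E_n(z)/E_{n−k}(z))^{1/k} tends to zero as z approaches the boundary of the positive cone Γ₊ (within bounded sets): explicitly, f_*(z) ≤ C(n,k) · min_i z_i^{1/k} · (max_i z_i)^{(k−1)/k} for z ∈ Γ₊. -/
noncomputable section

/-- Normalized k-th elementary symmetric polynomial. -/
def normESymm (n k : ℕ) (x : Fin n → ℝ) : ℝ :=
  (n.choose k : ℝ)⁻¹ * ∑ t ∈ Finset.powersetCard k (Finset.univ : Finset (Fin n)),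
    ∏ i ∈ t, x i

/-!
Since `E_n(z) = ∏ zₗ`, bounding `E_{n-k}(z)` from below by the single monomial indexed by the
complement of a `k`-set `T ∋ i` gives `E_n / E_{n-k} ≤ C(n, n-k) ∏_{l ∈ T} zₗ
≤ C(n, n-k) · zᵢ · (max z)^{k-1}`; the estimate follows by taking `k`-th roots.
-/

open Finset

theorem normESymm_self (n : ℕ) (x : Fin n → ℝ) : normESymm n n x = ∏ i, x i := by
  have huniv : powersetCard n (univ : Finset (Fin n)) = {univ} := by
    simpa using powersetCard_self (univ : Finset (Fin n))
  simp [normESymm, huniv]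

theorem normESymm_nonneg {n m : ℕ} {x : Fin n → ℝ} (hx : ∀ i, 0 ≤ x i) : 0 ≤ normESymm n m x :=
  mul_nonneg (by positivity) (sum_nonneg fun _ _ => prod_nonneg fun i _ => hx i)

theorem inv_choose_mul_prod_le_normESymm {n : ℕ} {x : Fin n → ℝ} (hx : ∀ i, 0 ≤ x i)
    {t : Finset (Fin n)} : (n.choose #t : ℝ)⁻¹ * ∏ i ∈ t, x i ≤ normESymm n #t x := by
  unfold normESymm
  gcongr
  exact single_le_sum (f := fun s => ∏ i ∈ s, x i) (fun s _ => prod_nonneg fun i _ => hx i)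
    (mem_powersetCard.2 ⟨subset_univ t, rfl⟩)

theorem normESymm_self_div_le {n : ℕ} {x : Fin n → ℝ} (hx : x ∈ PosCone n) (t : Finset (Fin n)) :
    normESymm n n x / normESymm n (n - #t) x ≤ (n.choose (n - #t) : ℝ) * ∏ i ∈ t, x i := by
  have hch : (0 : ℝ) < n.choose (n - #t) := by exact_mod_cast Nat.choose_pos (Nat.sub_le _ _)
  have hlow : (n.choose (n - #t) : ℝ)⁻¹ * ∏ i ∈ tᶜ, x i ≤ normESymm n (n - #t) x := by
    simpa [card_compl] using inv_choose_mul_prod_le_normESymm (fun i => (hx i).le) (t := tᶜ)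
  have hlow_pos : 0 < (n.choose (n - #t) : ℝ)⁻¹ * ∏ i ∈ tᶜ, x i :=
    mul_pos (inv_pos.2 hch) (prod_pos fun i _ => hx i)
  rw [div_le_iff₀ (hlow_pos.trans_le hlow), normESymm_self, ← prod_mul_prod_compl t]
  calc (∏ i ∈ t, x i) * ∏ i ∈ tᶜ, x i
      = ((n.choose (n - #t) : ℝ) * ∏ i ∈ t, x i) *
          ((n.choose (n - #t) : ℝ)⁻¹ * ∏ i ∈ tᶜ, x i) := by
        rw [mul_mul_mul_comm, mul_inv_cancel₀ hch.ne', one_mul]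
    _ ≤ _ := by gcongr; exact mul_nonneg hch.le (prod_nonneg fun i _ => (hx i).le)

theorem prod_le_mul_pow_card_sub_one {ι : Type*} [DecidableEq ι] {t : Finset ι} {x : ι → ℝ}
    {i : ι} {M : ℝ}
    (hx : ∀ j, 0 ≤ x j) (hi : i ∈ t) (hM : ∀ j, x j ≤ M) :
    ∏ j ∈ t, x j ≤ x i * M ^ (#t - 1) := by
  rw [← mul_prod_erase t x hi, ← card_erase_of_mem hi, ← prod_const]
  exact mul_le_mul_of_nonneg_left (prod_le_prod (fun j _ => hx j) fun j _ => hM j) (hx i)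

theorem rpow_inv_mul_mul_pow_le {C a b : ℝ} {k : ℕ} (hC : 1 ≤ C) (ha : 0 ≤ a) (hb : 0 ≤ b)
    (hk : 1 ≤ k) :
    (C * (a * b ^ (k - 1))) ^ ((1 : ℝ) / k) ≤ C * a ^ ((1 : ℝ) / k) * b ^ (((k : ℝ) - 1) / k) := by
  have hexp : ((k - 1 : ℕ) : ℝ) * ((1 : ℝ) / k) = ((k : ℝ) - 1) / k := by
    rw [Nat.cast_sub hk]; ring
  rw [Real.mul_rpow (by positivity) (by positivity), Real.mul_rpow ha (by positivity),
    ← Real.rpow_natCast b, ← Real.rpow_mul hb, hexp, ← mul_assoc]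
  gcongr
  calc C ^ ((1 : ℝ) / k) ≤ C ^ (1 : ℝ) :=
        Real.rpow_le_rpow_of_exponent_le hC
          (div_le_one_of_le₀ (by exact_mod_cast hk) (by positivity))
    _ = C := Real.rpow_one C

/-- The function f_*(z) = (E_n(z)/E_{n-k}(z))^{1/k} is controlled by
C(n,k) · (min zᵢ)^{1/k} · (max zᵢ)^{(k-1)/k}, hence tends to zero as z approaches
the boundary of Γ₊ within bounded sets. -/
theorem Ek_dual_boundary_estimate
    {n k : ℕ} (hk1 : 1 ≤ k) (hkn : k ≤ n) :
    ∃ C > (0 : ℝ), ∀ z ∈ PosCone n, ∀ i j : Fin n,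
      (∀ i', z i ≤ z i') → (∀ j', z j' ≤ z j) →
      (normESymm n n z / normESymm n (n - k) z) ^ ((1 : ℝ) / k) ≤
        C * (z i) ^ ((1 : ℝ) / k) * (z j) ^ (((k : ℝ) - 1) / k) := by
  have hC : (1 : ℝ) ≤ n.choose (n - k) := by
    exact_mod_cast Nat.one_le_iff_ne_zero.2 (Nat.choose_pos (Nat.sub_le n k)).ne'
  refine ⟨n.choose (n - k), one_pos.trans_le hC, fun z hz i j _ hj => ?_⟩
  have hz0 : ∀ l, 0 ≤ z l := fun l => (hz l).le
  obtain ⟨T, hiT, -, rfl⟩ := exists_subsuperset_card_eq (subset_univ {i})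
    (by simpa using hk1) (by simpa using hkn)
  have hdiv : normESymm n n z / normESymm n (n - #T) z ≤
      n.choose (n - #T) * (z i * z j ^ (#T - 1)) :=
    (normESymm_self_div_le hz T).trans <| by
      gcongr
      exact prod_le_mul_pow_card_sub_one hz0 (singleton_subset_iff.1 hiT) hj
  have hdiv0 : 0 ≤ normESymm n n z / normESymm n (n - #T) z :=
    div_nonneg (normESymm_nonneg hz0) (normESymm_nonneg hz0)
  exact (Real.rpow_le_rpow hdiv0 hdiv (by positivity)).trans
    (rpow_inv_mul_mul_pow_le hC (hz0 i) (hz0 j) hk1)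
end
end

section
/- If G₁ and G₂ are positive functions on Γ₊, each homogeneous of degree one and increasing in each argument, G₁ is inverse concave, G₂ is inverse concave, and the dual (G₂)_* approaches zero on the boundary of Γ₊, then for any 0 < σ < 1 the product F = G₁^σ G₂^{1−σ} is homogeneous of degree one, increasing in each argument, inverse concave, and its dual F_* = (G₁)_*^σ (G₂)_*^{1−σ} approaches zero on the boundary of Γ₊. -/
noncomputable section

/-- g approaches zero on the boundary of Γ₊ (within bounded sets). -/
def VanishesOnBoundary {n : ℕ} (g : (Fin n → ℝ) → ℝ) : Prop :=
  ∀ ε > (0 : ℝ), ∀ M > (0 : ℝ), ∃ δ > (0 : ℝ), ∀ z ∈ PosCone n,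
    (∀ i, z i ≤ M) → (∃ i, z i < δ) → g z < ε

lemma mul_rpow_pos_left {k a : ℝ} (hk : 0 < k) (p : ℝ) :
    (k * a) ^ p = k ^ p * a ^ p := by
  rcases lt_trichotomy a 0 with h | h | h
  · have hka : k * a < 0 := mul_neg_of_pos_of_neg hk h
    rw [Real.rpow_def_of_neg hka, Real.rpow_def_of_neg h, Real.rpow_def_of_pos hk,
      Real.log_mul hk.ne' h.ne, add_mul, Real.exp_add]
    ring
  · subst h
    rcases eq_or_ne p 0 with hp | hp
    · simp [hp]
    · simp [Real.zero_rpow hp]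
  · exact Real.mul_rpow hk.le h.le

lemma geom_concave {n : ℕ} {s : Set (Fin n → ℝ)} {f g : (Fin n → ℝ) → ℝ} {σ : ℝ}
    (hσ0 : 0 < σ) (hσ1 : σ < 1)
    (hf : ConcaveOn ℝ s f) (hg : ConcaveOn ℝ s g)
    (hf0 : ∀ x ∈ s, 0 ≤ f x) (hg0 : ∀ x ∈ s, 0 ≤ g x) :
    ConcaveOn ℝ s (fun x => f x ^ σ * g x ^ (1 - σ)) := by
  refine ⟨hf.1, fun x hx y hy a b ha hb hab => ?_⟩
  simp only [smul_eq_mul]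
  set p := a • x + b • y with hp
  have hps : p ∈ s := hf.1 hx hy ha hb hab
  have hu : a * f x + b * f y ≤ f p := by simpa using hf.2 hx hy ha hb hab
  have hv : a * g x + b * g y ≤ g p := by simpa using hg.2 hx hy ha hb hab
  have hfx := hf0 x hx; have hfy := hf0 y hy
  have hgx := hg0 x hx; have hgy := hg0 y hy
  have hu0 : 0 ≤ f p := hf0 p hps
  have hv0 : 0 ≤ g p := hg0 p hps
  have hP0 : 0 ≤ f p ^ σ * g p ^ (1 - σ) :=
    mul_nonneg (Real.rpow_nonneg hu0 _) (Real.rpow_nonneg hv0 _)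
  have hterm1 : ∀ c : ℝ, ∀ z, c * f z = 0 → c * (f z ^ σ * g z ^ (1 - σ)) = 0 := by
    intro c z h
    rcases mul_eq_zero.1 h with h | h
    · simp [h]
    · simp [h, Real.zero_rpow hσ0.ne']
  have hterm2 : ∀ c : ℝ, ∀ z, c * g z = 0 → c * (f z ^ σ * g z ^ (1 - σ)) = 0 := by
    intro c z h
    rcases mul_eq_zero.1 h with h | h
    · simp [h]
    · have h1σ : (1 : ℝ) - σ ≠ 0 := by linarith
      simp [h, Real.zero_rpow h1σ]
  rcases eq_or_lt_of_le hu0 with h0 | hup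
  · have h1 : a * f x = 0 := by
      nlinarith [mul_nonneg ha hfx, mul_nonneg hb hfy]
    have h2 : b * f y = 0 := by
      nlinarith [mul_nonneg ha hfx, mul_nonneg hb hfy]
    rw [hterm1 a x h1, hterm1 b y h2]
    simpa using hP0
  rcases eq_or_lt_of_le hv0 with h0 | hvp
  · have h1 : a * g x = 0 := by
      nlinarith [mul_nonneg ha hgx, mul_nonneg hb hgy]
    have h2 : b * g y = 0 := by
      nlinarith [mul_nonneg ha hgx, mul_nonneg hb hgy]
    rw [hterm2 a x h1, hterm2 b y h2]
    simpa using hP0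
  have key : ∀ z ∈ s, f z ^ σ * g z ^ (1 - σ) ≤
      f p ^ σ * g p ^ (1 - σ) * (σ * (f z / f p) + (1 - σ) * (g z / g p)) := by
    intro z hz
    have h1 : (f z / f p) ^ σ * (g z / g p) ^ (1 - σ) ≤
        σ * (f z / f p) + (1 - σ) * (g z / g p) :=
      Real.geom_mean_le_arith_mean2_weighted hσ0.le (by linarith)
        (div_nonneg (hf0 z hz) hup.le) (div_nonneg (hg0 z hz) hvp.le) (by ring)
    have hps' : (0:ℝ) < f p ^ σ := Real.rpow_pos_of_pos hup σ
    have hps'' : (0:ℝ) < g p ^ (1 - σ) := Real.rpow_pos_of_pos hvp (1 - σ)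
    have h2 : f p ^ σ * g p ^ (1 - σ) * ((f z / f p) ^ σ * (g z / g p) ^ (1 - σ)) =
        f z ^ σ * g z ^ (1 - σ) := by
      rw [Real.div_rpow (hf0 z hz) hup.le, Real.div_rpow (hg0 z hz) hvp.le]
      field_simp
    calc f z ^ σ * g z ^ (1 - σ)
        = f p ^ σ * g p ^ (1 - σ) * ((f z / f p) ^ σ * (g z / g p) ^ (1 - σ)) := h2.symm
      _ ≤ _ := mul_le_mul_of_nonneg_left h1 hP0
  have hS : σ * ((a * f x + b * f y) / f p) + (1 - σ) * ((a * g x + b * g y) / g p) ≤ 1 := by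
    have h1 : (a * f x + b * f y) / f p ≤ 1 := (div_le_one hup).2 hu
    have h2 : (a * g x + b * g y) / g p ≤ 1 := (div_le_one hvp).2 hv
    nlinarith
  calc a * (f x ^ σ * g x ^ (1 - σ)) + b * (f y ^ σ * g y ^ (1 - σ))
      ≤ a * (f p ^ σ * g p ^ (1 - σ) * (σ * (f x / f p) + (1 - σ) * (g x / g p))) +
        b * (f p ^ σ * g p ^ (1 - σ) * (σ * (f y / f p) + (1 - σ) * (g y / g p))) :=
        add_le_add (mul_le_mul_of_nonneg_left (key x hx) ha)
          (mul_le_mul_of_nonneg_left (key y hy) hb)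
    _ = f p ^ σ * g p ^ (1 - σ) *
        (σ * ((a * f x + b * f y) / f p) + (1 - σ) * ((a * g x + b * g y) / g p)) := by
        ring
    _ ≤ f p ^ σ * g p ^ (1 - σ) * 1 := mul_le_mul_of_nonneg_left hS hP0
    _ = f p ^ σ * g p ^ (1 - σ) := mul_one _

/-- A weighted geometric mean F = G₁^σ G₂^{1-σ} of two admissible speeds is again
homogeneous of degree one, increasing, inverse concave, its dual is the corresponding
geometric mean of duals, and its dual approaches zero on ∂Γ₊. -/
theorem geometric_mean_of_speeds
    {n : ℕ} (G₁ G₂ : (Fin n → ℝ) → ℝ) (σ : ℝ) (hσ0 : 0 < σ) (hσ1 : σ < 1)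
    (hpos₁ : ∀ x ∈ PosCone n, 0 < G₁ x)
    (hpos₂ : ∀ x ∈ PosCone n, 0 < G₂ x)
    (hhomog₁ : ∀ k : ℝ, 0 < k → ∀ x, G₁ (k • x) = k * G₁ x)
    (hhomog₂ : ∀ k : ℝ, 0 < k → ∀ x, G₂ (k • x) = k * G₂ x)
    (hmono₁ : ∀ x ∈ PosCone n, ∀ y ∈ PosCone n, (∀ i, x i ≤ y i) → G₁ x ≤ G₁ y)
    (hmono₂ : ∀ x ∈ PosCone n, ∀ y ∈ PosCone n, (∀ i, x i ≤ y i) → G₂ x ≤ G₂ y)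
    (hic₁ : ConcaveOn ℝ (PosCone n) (dualFn G₁))
    (hic₂ : ConcaveOn ℝ (PosCone n) (dualFn G₂))
    (hvan₂ : VanishesOnBoundary (dualFn G₂)) :
    (∀ k : ℝ, 0 < k → ∀ x,
        G₁ (k • x) ^ σ * G₂ (k • x) ^ (1 - σ) = k * (G₁ x ^ σ * G₂ x ^ (1 - σ))) ∧
    (∀ x ∈ PosCone n, ∀ y ∈ PosCone n, (∀ i, x i ≤ y i) →
        G₁ x ^ σ * G₂ x ^ (1 - σ) ≤ G₁ y ^ σ * G₂ y ^ (1 - σ)) ∧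
    ConcaveOn ℝ (PosCone n) (dualFn fun x => G₁ x ^ σ * G₂ x ^ (1 - σ)) ∧
    (∀ z ∈ PosCone n,
        dualFn (fun x => G₁ x ^ σ * G₂ x ^ (1 - σ)) z =
          dualFn G₁ z ^ σ * dualFn G₂ z ^ (1 - σ)) ∧
    VanishesOnBoundary (dualFn fun x => G₁ x ^ σ * G₂ x ^ (1 - σ)) := by
  have hw : ∀ z ∈ PosCone n, (fun i => (z i)⁻¹) ∈ PosCone n :=
    fun z hz i => inv_pos.2 (hz i)
  have hconv : Convex ℝ (PosCone n) := by
    intro x hx y hy a b ha hb hab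
    intro i
    simp only [Pi.add_apply, Pi.smul_apply, smul_eq_mul]
    rcases lt_or_eq_of_le ha with h | h
    · nlinarith [mul_pos h (hx i), mul_nonneg hb (hy i).le]
    · have hb1 : b = 1 := by linarith
      simp [← h, hb1]
      exact hy i
  -- dual equality
  have hdeq : ∀ z ∈ PosCone n,
      dualFn (fun x => G₁ x ^ σ * G₂ x ^ (1 - σ)) z =
        dualFn G₁ z ^ σ * dualFn G₂ z ^ (1 - σ) := by
    intro z hz
    have hwz := hw z hz
    simp only [dualFn]
    rw [Real.inv_rpow (hpos₁ _ hwz).le, Real.inv_rpow (hpos₂ _ hwz).le, mul_inv]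
  -- positivity of duals
  have hd1 : ∀ z ∈ PosCone n, 0 < dualFn G₁ z :=
    fun z hz => inv_pos.2 (hpos₁ _ (hw z hz))
  have hd2 : ∀ z ∈ PosCone n, 0 < dualFn G₂ z :=
    fun z hz => inv_pos.2 (hpos₂ _ (hw z hz))
  refine ⟨?_, ?_, ?_, hdeq, ?_⟩
  · -- homogeneity
    intro k hk x
    rw [hhomog₁ k hk, hhomog₂ k hk, mul_rpow_pos_left hk, mul_rpow_pos_left hk]
    have hk1 : k ^ σ * k ^ (1 - σ) = k := by
      rw [← Real.rpow_add hk]; norm_num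
    linear_combination (G₁ x ^ σ * G₂ x ^ (1 - σ)) * hk1
  · -- monotonicity
    intro x hx y hy hle
    exact mul_le_mul
      (Real.rpow_le_rpow (hpos₁ x hx).le (hmono₁ x hx y hy hle) hσ0.le)
      (Real.rpow_le_rpow (hpos₂ x hx).le (hmono₂ x hx y hy hle) (by linarith))
      (Real.rpow_nonneg (hpos₂ x hx).le _)
      (Real.rpow_nonneg (hpos₁ y hy).le _)
  · -- inverse concavity
    have hφ : ConcaveOn ℝ (PosCone n)
        (fun z => dualFn G₁ z ^ σ * dualFn G₂ z ^ (1 - σ)) :=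
      geom_concave hσ0 hσ1 hic₁ hic₂ (fun z hz => (hd1 z hz).le) (fun z hz => (hd2 z hz).le)
    refine ⟨hconv, fun x hx y hy a b ha hb hab => ?_⟩
    have hm : a • x + b • y ∈ PosCone n := hconv hx hy ha hb hab
    rw [hdeq x hx, hdeq y hy, hdeq _ hm]
    exact hφ.2 hx hy ha hb hab
  · -- vanishing on boundary
    intro ε hε M hM
    have hone : (fun _ => M⁻¹ : Fin n → ℝ) ∈ PosCone n := fun i => inv_pos.2 hM
    set C : ℝ := (G₁ fun _ => M⁻¹)⁻¹ with hCdef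
    have hC : 0 < C := inv_pos.2 (hpos₁ _ hone)
    have hbound : ∀ z ∈ PosCone n, (∀ i, z i ≤ M) → dualFn G₁ z ≤ C := by
      intro z hz hzM
      have hwz := hw z hz
      have hle : ∀ i, M⁻¹ ≤ (z i)⁻¹ := fun i => by
        rw [inv_le_inv₀ hM (hz i)]
        exact hzM i
      have h1 : G₁ (fun _ => M⁻¹) ≤ G₁ (fun i => (z i)⁻¹) := hmono₁ _ hone _ hwz hle
      exact inv_anti₀ (hpos₁ _ hone) h1
    have hden : (0:ℝ) < C ^ σ + 1 := by positivity
    set ε' : ℝ := (ε / (C ^ σ + 1)) ^ ((1 - σ)⁻¹) with hε'def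
    have hbase : 0 < ε / (C ^ σ + 1) := div_pos hε hden
    have hε'pos : 0 < ε' := Real.rpow_pos_of_pos hbase _
    obtain ⟨δ, hδ, hδ'⟩ := hvan₂ ε' hε'pos M hM
    refine ⟨δ, hδ, fun z hz hzM hzδ => ?_⟩
    rw [hdeq z hz]
    have h2 : dualFn G₂ z < ε' := hδ' z hz hzM hzδ
    have h1σ : (1:ℝ) - σ ≠ 0 := by linarith
    have hε'pow : ε' ^ (1 - σ) = ε / (C ^ σ + 1) := by
      rw [hε'def, ← Real.rpow_mul hbase.le, inv_mul_cancel₀ h1σ, Real.rpow_one]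
    calc dualFn G₁ z ^ σ * dualFn G₂ z ^ (1 - σ)
        ≤ C ^ σ * dualFn G₂ z ^ (1 - σ) :=
          mul_le_mul_of_nonneg_right
            (Real.rpow_le_rpow (hd1 z hz).le (hbound z hz hzM) hσ0.le)
            (Real.rpow_nonneg (hd2 z hz).le _)
      _ < C ^ σ * ε' ^ (1 - σ) :=
          mul_lt_mul_of_pos_left
            (Real.rpow_lt_rpow (hd2 z hz).le h2 (by linarith))
            (Real.rpow_pos_of_pos hC _)
      _ = C ^ σ * (ε / (C ^ σ + 1)) := by rw [hε'pow]
      _ < (C ^ σ + 1) * (ε / (C ^ σ + 1)) :=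
          mul_lt_mul_of_pos_right (lt_add_one _) (div_pos hε hden)
      _ = ε := by field_simp
end
end

section
/- Let κ ∈ Γ₊ with all κᵢ ≥ 1 (h-convexity) and let f be positive, symmetric, homogeneous of degree one, normalized (f(1,…,1) = 1), increasing, and inverse concave on Γ₊, with dual f_* approaching zero on ∂Γ₊ in the sense: for every ε > 0 there is δ > 0 such that z ∈ Γ₊, min zᵢ < δ, max zᵢ ≤ 1 implies f_*(z) < ε. If f(κ) ≤ C₀, then there exists C = C(C₀, f) such that κᵢ ≤ C for all i. -/
noncomputable section

/-- If f is admissible with dual vanishing on ∂Γ₊, then an h-convex curvature vector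
κ (all κᵢ ≥ 1) with f(κ) ≤ C₀ has all entries bounded by a constant C = C(C₀, f). -/
theorem curvature_bound_from_speed_bound
    {n : ℕ} (f : (Fin n → ℝ) → ℝ) (C₀ : ℝ)
    (hpos : ∀ x ∈ PosCone n, 0 < f x)
    (hsymm : ∀ σ : Equiv.Perm (Fin n), ∀ x, f (x ∘ σ) = f x)
    (hhomog : ∀ k : ℝ, 0 < k → ∀ x, f (k • x) = k * f x)
    (hnorm : f (fun _ => 1) = 1)
    (hmono : ∀ x ∈ PosCone n, ∀ y ∈ PosCone n, (∀ i, x i ≤ y i) → f x ≤ f y)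
    (hinvconc : ConcaveOn ℝ (PosCone n) (dualFn f))
    (hvanish : ∀ ε > (0 : ℝ), ∃ δ > (0 : ℝ), ∀ z ∈ PosCone n,
      (∃ i, z i < δ) → (∀ i, z i ≤ 1) → dualFn f z < ε) :
    ∃ C : ℝ, ∀ κ ∈ PosCone n, (∀ i, 1 ≤ κ i) → f κ ≤ C₀ → ∀ i, κ i ≤ C := by
  by_cases hC : 0 < C₀
  · obtain ⟨δ, hδ, hd⟩ := hvanish C₀⁻¹ (by positivity)
    refine ⟨δ⁻¹, fun κ hκ h1 hf i => ?_⟩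
    have hzpos : (fun i => (κ i)⁻¹) ∈ PosCone n := fun j => by
      have := hκ j; positivity
    have hdual : dualFn f (fun i => (κ i)⁻¹) = (f κ)⁻¹ := by
      unfold dualFn
      congr 1
      congr 1
      funext j
      simp
    by_contra hlt
    push_neg at hlt
    have hzi : (κ i)⁻¹ < δ := by
      have hκi : 0 < κ i := hκ i
      rw [inv_lt_comm₀ hκi hδ]
      exact hlt
    have hle1 : ∀ j, (κ j)⁻¹ ≤ 1 := fun j => by
      rw [inv_le_one_iff₀]; right; exact h1 j
    have := hd _ hzpos ⟨i, hzi⟩ hle1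
    rw [hdual] at this
    have hfpos := hpos κ hκ
    have : C₀ < f κ := by
      rwa [inv_lt_inv₀ hfpos hC] at this
    linarith
  · refine ⟨0, fun κ hκ h1 hf i => absurd hf ?_⟩
    push_neg at hC ⊢
    exact lt_of_le_of_lt hC (hpos κ hκ)
end
end
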